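/- Let k be a field of characteristic zero, let r ≥ 1 be an integer, and let λ ∈ k with λ ≠ 0 and λ² ≠ 1. For s ∈ {0, 1, ..., r−1}, ε ∈ {1, −1} and δ ∈ {0, 1}, define the function f_{s,ε,δ} : D∞ → k by f_{s,ε,δ}(g^i x^j) = i^s · λ^{ε·i} · (−1)^{δ·j} (for i ∈ ℤ, j ∈ {0,1}, with the convention 0^0 = 1). Then these 4r functions are linearly independent in the k-vector space of all functions from D∞ to k. -/
import Mathlib


/-- The identity `ZMod 0 = ℤ`. -/
def toInt (i : ZMod 0) : ℤ := i

/-- The function `f_{s,ε,δ} : D∞ → k`, `f_{s,ε,δ}(gⁱxʲ) = iˢ · λ^{εi} · (-1)^{δj}`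
(with `0⁰ = 1`); `ε = 1, -1` is encoded by `e = true, false` and `δ = 0, 1` by
`d = false, true`.  Here `DihedralGroup 0` is the infinite dihedral group with
`g = DihedralGroup.r 1`, `x = DihedralGroup.sr 0`, so that `DihedralGroup.r i = gⁱ`
and `DihedralGroup.sr i = g⁻ⁱx`. -/
def ffun (k : Type*) [Field k] (l : k) (s : ℕ) (e d : Bool) : DihedralGroup 0 → k
  | .r i => ((toInt i : ℤ) : k) ^ s * l ^ (if e then toInt i else -toInt i)
  | .sr i => (if d then (-1 : k) else 1) *
      ((-toInt i : ℤ) : k) ^ s * l ^ (if e then -toInt i else toInt i)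

open Polynomial

@[simp] lemma toInt_coe (i : ℤ) : toInt (i : ZMod 0) = i := rfl

lemma vanish {k : Type*} [Field k] [CharZero k] (μ : k) (hμ : μ ≠ 0) (P : k[X])
    (h : ∀ i : ℤ, P.eval (i : k) * μ ^ i = 0) : P = 0 := by
  apply Polynomial.eq_zero_of_infinite_isRoot
  apply Set.infinite_of_injective_forall_mem (f := (Int.cast : ℤ → k)) Int.cast_injective
  intro i
  have := h i
  have hz : μ ^ i ≠ 0 := zpow_ne_zero _ hμ
  simpa [Polynomial.IsRoot, hz] using this

lemma taylor_ne_zero {k : Type*} [Field k] {P : k[X]} (hP : P ≠ 0) :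
    Polynomial.taylor 1 P ≠ 0 := fun h => hP (Polynomial.taylor_injective 1 (by simpa using h))

lemma taylor_lead {k : Type*} [Field k] (P : k[X]) :
    (Polynomial.taylor 1 P).coeff P.natDegree = P.coeff P.natDegree := by
  by_cases hP : P = 0
  · simp [hP]
  conv_lhs => rw [← Polynomial.natDegree_taylor P 1]
  rw [Polynomial.coeff_natDegree, Polynomial.coeff_natDegree, Polynomial.taylor_apply]
  by_cases hd : P.natDegree = 0
  · obtain ⟨c, rfl⟩ := Polynomial.natDegree_eq_zero.mp hd
    simp
  · rw [Polynomial.leadingCoeff_comp (by rw [Polynomial.natDegree_X_add_C]; norm_num),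
      (Polynomial.monic_X_add_C (1 : k)).leadingCoeff, one_pow, mul_one]

lemma keyA_aux {k : Type*} [Field k] [CharZero k] (l : k) (hl0 : l ≠ 0) (hl1 : l ^ 2 ≠ 1)
    (n : ℕ) : ∀ P Q : k[X], (Q = 0 ∨ Q.natDegree < n) →
    (∀ i : ℤ, P.eval (i : k) * l ^ i + Q.eval (i : k) * l ^ (-i) = 0) → P = 0 ∧ Q = 0 := by
  have hll : l - l⁻¹ ≠ 0 := by
    intro h
    apply hl1
    have h2 : l = l⁻¹ := sub_eq_zero.mp h
    field_simp at h2
    rw [sq]; linear_combination h2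
  induction n with
  | zero =>
    intro P Q hQ h
    have hQ0 : Q = 0 := by rcases hQ with h0 | h0; exact h0; omega
    subst hQ0
    refine ⟨vanish l hl0 P fun i => by simpa using h i, rfl⟩
  | succ n ih =>
    intro P Q hQ h
    set P' : k[X] := l • Polynomial.taylor 1 P - l⁻¹ • P with hP'def
    set Q' : k[X] := l⁻¹ • (Polynomial.taylor 1 Q - Q) with hQ'def
    have h' : ∀ i : ℤ, P'.eval (i : k) * l ^ i + Q'.eval (i : k) * l ^ (-i) = 0 := by
      intro i
      have h1 := h (i + 1)
      have h2 := h i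
      rw [show ((i + 1 : ℤ) : k) = (i : k) + 1 by push_cast; ring] at h1
      rw [zpow_add₀ hl0, neg_add, zpow_add₀ hl0 (-i)] at h1
      simp only [hP'def, hQ'def, Polynomial.eval_sub, Polynomial.eval_smul, smul_eq_mul,
        Polynomial.taylor_eval, zpow_one, zpow_neg_one] at h1 ⊢
      linear_combination h1 - l⁻¹ * h2
    have hQ' : Q' = 0 ∨ Q'.natDegree < n := by
      rcases hQ with h0 | hdeg
      · left; simp [hQ'def, h0]
      by_cases hd0 : Q.natDegree = 0
      · left
        obtain ⟨c, rfl⟩ := Polynomial.natDegree_eq_zero.mp hd0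
        simp [hQ'def, Polynomial.taylor_C]
      by_cases hz : Polynomial.taylor 1 Q - Q = 0
      · left; simp [hQ'def, hz]
      right
      have hQ0 : Q ≠ 0 := fun h => hd0 (by simp [h])
      have hdl : (Polynomial.taylor 1 Q - Q).degree < (Polynomial.taylor 1 Q).degree := by
        refine Polynomial.degree_sub_lt ?_ (taylor_ne_zero hQ0) ?_
        · rw [Polynomial.degree_eq_natDegree (taylor_ne_zero hQ0),
            Polynomial.degree_eq_natDegree hQ0, Polynomial.natDegree_taylor]
        · rw [Polynomial.leadingCoeff, Polynomial.leadingCoeff, Polynomial.natDegree_taylor]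
          exact taylor_lead Q
      have hlt : (Polynomial.taylor 1 Q - Q).natDegree < Q.natDegree := by
        have := Polynomial.natDegree_lt_natDegree hz hdl
        rwa [Polynomial.natDegree_taylor] at this
      have hsm : Q'.natDegree ≤ (Polynomial.taylor 1 Q - Q).natDegree :=
        Polynomial.natDegree_smul_le _ _
      omega
    obtain ⟨hP'0, hQ'0⟩ := ih P' Q' hQ' h'
    have hP : P = 0 := by
      by_contra hP
      have hc : P'.coeff P.natDegree = (l - l⁻¹) * P.leadingCoeff := by
        rw [hP'def]
        simp only [Polynomial.coeff_sub, Polynomial.coeff_smul, smul_eq_mul, taylor_lead,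
          Polynomial.coeff_natDegree]
        ring
      rw [hP'0, Polynomial.coeff_zero] at hc
      rcases mul_eq_zero.mp hc.symm with h | h
      · exact hll h
      · exact hP (Polynomial.leadingCoeff_eq_zero.mp h)
    refine ⟨hP, ?_⟩
    apply vanish l⁻¹ (inv_ne_zero hl0) Q
    intro i
    have := h i
    rw [hP] at this
    simpa [inv_zpow, ← zpow_neg] using this

lemma keyA {k : Type*} [Field k] [CharZero k] (l : k) (hl0 : l ≠ 0) (hl1 : l ^ 2 ≠ 1)
    (P Q : k[X]) (h : ∀ i : ℤ, P.eval (i : k) * l ^ i + Q.eval (i : k) * l ^ (-i) = 0) :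
    P = 0 ∧ Q = 0 :=
  keyA_aux l hl0 hl1 (Q.natDegree + 1) P Q (Or.inr (Nat.lt_succ_self _)) h

lemma coeff_sum_fin {k : Type*} [Field k] {r : ℕ} (a : Fin r → k) (s0 : Fin r) :
    (∑ s : Fin r, Polynomial.C (a s) * Polynomial.X ^ (s : ℕ)).coeff (s0 : ℕ) = a s0 := by
  rw [Polynomial.finset_sum_coeff]
  rw [Finset.sum_eq_single s0]
  · simp
  · intro b _ hb
    simp [Polynomial.coeff_X_pow, Fin.val_eq_val, hb, (Ne.symm hb)]
  · simp

theorem stmt16 (k : Type*) [Field k] [CharZero k] (r : ℕ) (hr : 1 ≤ r)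
    (l : k) (hl0 : l ≠ 0) (hl1 : l ^ 2 ≠ 1) :
    LinearIndependent k
      (fun p : Fin r × Bool × Bool => ffun k l p.1.1 p.2.1 p.2.2) := by
  rw [Fintype.linearIndependent_iff]
  intro c hc
  set P : Bool → k[X] := fun e =>
    ∑ s : Fin r, Polynomial.C (c (s, e, false) + c (s, e, true)) * Polynomial.X ^ (s : ℕ) with hP
  set Q : Bool → k[X] := fun e =>
    ∑ s : Fin r, Polynomial.C (c (s, e, false) - c (s, e, true)) * Polynomial.X ^ (s : ℕ) with hQ
  have e1 : ∀ i : ℤ, (P true).eval (i : k) * l ^ i + (P false).eval (i : k) * l ^ (-i) = 0 := by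
    intro i
    have h0 := congrFun hc (DihedralGroup.r (i : ZMod 0))
    simp only [Finset.sum_apply, Pi.smul_apply, Pi.zero_apply, smul_eq_mul, ffun,
      toInt_coe] at h0
    simp only [Fintype.sum_prod_type, Fintype.sum_bool, hP, Polynomial.eval_finset_sum,
      Polynomial.eval_mul, Polynomial.eval_C, Polynomial.eval_pow,
      Polynomial.eval_X, Bool.false_eq_true, if_true, if_false,
      Bool.cond_true, Bool.cond_false] at h0 ⊢
    rw [← h0, Finset.sum_mul, Finset.sum_mul, ← Finset.sum_add_distrib]
    apply Finset.sum_congr rfl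
    intro s _
    ring
  have e2 : ∀ i : ℤ, (Q true).eval (i : k) * l ^ i + (Q false).eval (i : k) * l ^ (-i) = 0 := by
    intro i
    have h0 := congrFun hc (DihedralGroup.sr ((-i : ℤ) : ZMod 0))
    simp only [Finset.sum_apply, Pi.smul_apply, Pi.zero_apply, smul_eq_mul, ffun,
      toInt_coe, neg_neg, Int.cast_neg] at h0
    simp only [Fintype.sum_prod_type, Fintype.sum_bool, hQ, Polynomial.eval_finset_sum,
      Polynomial.eval_mul, Polynomial.eval_C, Polynomial.eval_pow,
      Polynomial.eval_X, Bool.false_eq_true, if_true, if_false,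
      Bool.cond_true, Bool.cond_false] at h0 ⊢
    rw [← h0, Finset.sum_mul, Finset.sum_mul, ← Finset.sum_add_distrib]
    apply Finset.sum_congr rfl
    intro s _
    ring
  obtain ⟨hPt, hPf⟩ := keyA l hl0 hl1 (P true) (P false) e1
  obtain ⟨hQt, hQf⟩ := keyA l hl0 hl1 (Q true) (Q false) e2
  rintro ⟨s, e, d⟩
  have hsum : c (s, e, false) + c (s, e, true) = 0 := by
    have := coeff_sum_fin (fun s => c (s, e, false) + c (s, e, true)) s
    rw [show (∑ t : Fin r, Polynomial.C (c (t, e, false) + c (t, e, true)) *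
        Polynomial.X ^ (t : ℕ)) = P e from rfl] at this
    cases e <;> simp [hPt, hPf] at this <;> linear_combination this.symm
  have hdiff : c (s, e, false) - c (s, e, true) = 0 := by
    have := coeff_sum_fin (fun s => c (s, e, false) - c (s, e, true)) s
    rw [show (∑ t : Fin r, Polynomial.C (c (t, e, false) - c (t, e, true)) *
        Polynomial.X ^ (t : ℕ)) = Q e from rfl] at this
    cases e <;> simp [hQt, hQf] at this <;> linear_combination this.symm
  cases d
  · linear_combination (hsum + hdiff) / 2
  · linear_combination (hsum - hdiff) / 2
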